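/- arXiv:2211.14567 — 9 statements merged into one kernel-verified Lean document; each statement's English description precedes it below -/
import Mathlib

section
/- For any measurable function h from X to the reals and any coherent upper probability P-bar on a finite set X, the set function Omega_h defined by Omega_h(E) = P-bar({x : h(x) <= sup_{e in E} h(e)}) is consonant, i.e., there exists a contour function omega_h with sup over X of omega_h equal to 1 such that Omega_h(E) = sup_{x in E} omega_h(x). -/
/-!
Both `Ω_h` and the contour `ω x = P̄{x' | h x' ≤ h x}` only evaluate `P̄` on sublevel sets of `h`.
On a finite set the supremum of `h` over a nonempty `E` is attained at some `e₀ ∈ E`, so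
`Ω_h(E) = ω e₀`, and monotonicity of `P̄` makes `ω e₀` the largest value of `ω` on `E`.
Taking `E = X` gives `⨆ ω = P̄(X) = 1`.
-/

open MeasureTheory
open scoped ENNReal

section Consonance

variable {X : Type*}

theorem setOf_coe_le_biSup_eq_of_forall_le {h : X → ℝ} {E : Set X} {e₀ : X}
    (he₀ : e₀ ∈ E) (hmax : ∀ e ∈ E, h e ≤ h e₀) :
    {x | (h x : EReal) ≤ ⨆ e ∈ E, (h e : EReal)} = {x | h x ≤ h e₀} := by
  have hsup : (⨆ e ∈ E, (h e : EReal)) = h e₀ :=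
    le_antisymm (iSup₂_le fun e he => EReal.coe_le_coe (hmax e he))
      (le_iSup₂ (f := fun e (_ : e ∈ E) => (h e : EReal)) e₀ he₀)
  ext x
  simp [hsup]

theorem apply_setOf_coe_le_biSup {α : Type*} [CompleteLattice α] [Finite X]
    (Φ : Set X → α) (hΦ : Monotone Φ) (hΦ₀ : Φ ∅ = ⊥) (h : X → ℝ) (E : Set X) :
    Φ {x | (h x : EReal) ≤ ⨆ e ∈ E, (h e : EReal)} = ⨆ e ∈ E, Φ {x | h x ≤ h e} := by
  rcases E.eq_empty_or_nonempty with rfl | hE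
  · simp [hΦ₀]
  obtain ⟨e₀, he₀, hmax⟩ := Set.exists_max_image E h E.toFinite hE
  rw [setOf_coe_le_biSup_eq_of_forall_le he₀ hmax]
  exact le_antisymm (le_iSup₂ (f := fun e (_ : e ∈ E) => Φ {x | h x ≤ h e}) e₀ he₀)
    (iSup₂_le fun e he => hΦ fun x hx => le_trans hx (hmax e he))

end Consonance

namespace MeasureTheory

variable {X : Type*} [MeasurableSpace X]

noncomputable def upperProbability (C : Set (Measure X)) (s : Set X) : ℝ≥0∞ :=
  ⨆ P ∈ C, P s

theorem upperProbability_mono (C : Set (Measure X)) : Monotone (upperProbability C) :=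
  fun _ _ hst => iSup₂_mono fun _ _ => measure_mono hst

@[simp]
theorem upperProbability_empty (C : Set (Measure X)) : upperProbability C ∅ = 0 := by
  simp [upperProbability]

theorem upperProbability_univ {C : Set (Measure X)} (hC : C.Nonempty)
    (hprob : ∀ P ∈ C, IsProbabilityMeasure P) : upperProbability C Set.univ = 1 := by
  obtain ⟨P₀, hP₀⟩ := hC
  have hone : ∀ P ∈ C, P Set.univ = 1 := fun P hP => (hprob P hP).measure_univ
  exact le_antisymm (iSup₂_le fun P hP => (hone P hP).le)
    ((hone P₀ hP₀).ge.trans (le_iSup₂ (f := fun P (_ : P ∈ C) => P Set.univ) P₀ hP₀))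

end MeasureTheory

theorem stmt0_general {X : Type*} [Fintype X] [MeasurableSpace X]
    (C : Set (Measure X)) (hC : C.Nonempty)
    (hprob : ∀ P ∈ C, IsProbabilityMeasure P)
    (h : X → ℝ) :
    ∃ ω : X → ℝ≥0∞, (⨆ x, ω x) = 1 ∧
      ∀ E : Set X,
        (⨆ P ∈ C, P {x | (h x : EReal) ≤ ⨆ e ∈ E, (h e : EReal)}) = ⨆ x ∈ E, ω x := by
  have hconsonant := apply_setOf_coe_le_biSup (upperProbability C)
    (upperProbability_mono C) (upperProbability_empty C) h
  refine ⟨fun x => upperProbability C {x' | h x' ≤ h x}, ?_, hconsonant⟩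
  have hlevel_univ : {x | (h x : EReal) ≤ ⨆ e ∈ Set.univ, (h e : EReal)} = Set.univ :=
    Set.eq_univ_of_forall fun x =>
      le_iSup₂ (f := fun e (_ : e ∈ Set.univ) => (h e : EReal)) x trivial
  rw [← iSup_univ, ← hconsonant, hlevel_univ, upperProbability_univ hC hprob]

/-- For any measurable `h : X → ℝ` and any coherent upper probability (upper envelope of a
nonempty set `C` of probability measures) on a finite set `X`, the set function
`Ω_h(E) = P̄({x : h x ≤ sup_{e ∈ E} h e})` is consonant: there is a contour `ω` with
`⨆ x, ω x = 1` such that `Ω_h(E) = ⨆ x ∈ E, ω x`. -/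
theorem stmt0 {X : Type*} [Fintype X] [Nonempty X] [MeasurableSpace X]
    [MeasurableSingletonClass X]
    (C : Set (Measure X)) (hC : C.Nonempty)
    (hprob : ∀ P ∈ C, IsProbabilityMeasure P)
    (h : X → ℝ) (hmeas : Measurable h) :
    ∃ ω : X → ℝ≥0∞, (⨆ x, ω x) = 1 ∧
      ∀ E : Set X,
        (⨆ P ∈ C, P {x | (h x : EReal) ≤ ⨆ e ∈ E, (h e : EReal)}) = ⨆ x ∈ E, ω x :=
  stmt0_general C hC hprob h
end

section
/- For any probability measure P in the credal set of a coherent upper probability P-bar on a finite set X, and for the contour omega_h(x) = P-bar({x' : h(x') <= h(x)}), it holds that P({x : omega_h(x) <= alpha}) <= alpha for all alpha in [0,1]. -/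
open MeasureTheory
open scoped ENNReal

/-- A finite set `A` lies in the sublevel set of `h` at a point of `A` where `h` is maximal. -/
theorem measure_le_of_measure_sublevel_le {X β : Type*} [MeasurableSpace X] [LinearOrder β]
    {μ : Measure X} {h : X → β} {A : Set X} (hA : A.Finite) {α : ℝ≥0∞}
    (hle : ∀ x ∈ A, μ {x' | h x' ≤ h x} ≤ α) : μ A ≤ α := by
  rcases A.eq_empty_or_nonempty with rfl | hAne
  · simp
  obtain ⟨x₀, hx₀A, hx₀max⟩ := Set.exists_max_image A h hA hAne
  calc μ A ≤ μ {x' | h x' ≤ h x₀} := measure_mono hx₀max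
    _ ≤ α := hle x₀ hx₀A

theorem stmt2_general {X : Type*} [Fintype X] [MeasurableSpace X]
    (C : Set (Measure X))
    (h : X → ℝ)
    (P : Measure X) (hP : P ∈ C) :
    ∀ α : ℝ≥0∞, α ≤ 1 →
      P {x | (⨆ Q ∈ C, Q {x' | h x' ≤ h x}) ≤ α} ≤ α := by
  intro α _
  refine measure_le_of_measure_sublevel_le (h := h) (Set.toFinite _) fun x hx => ?_
  exact (le_biSup (fun Q : Measure X => Q {x' | h x' ≤ h x}) hP).trans hx

/-- For any `P` in the credal set `C` of a coherent upper probability `P̄ = ⨆ Q ∈ C, Q ·` on a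
finite set `X`, with contour `ω_h x = P̄ {x' | h x' ≤ h x}`, one has
`P {x | ω_h x ≤ α} ≤ α` for all `α ∈ [0,1]`. -/
theorem stmt2 {X : Type*} [Fintype X] [MeasurableSpace X] [MeasurableSingletonClass X]
    (C : Set (Measure X)) (hC : C.Nonempty)
    (hprob : ∀ P ∈ C, IsProbabilityMeasure P)
    (h : X → ℝ)
    (P : Measure X) (hP : P ∈ C) :
    ∀ α : ℝ≥0∞, α ≤ 1 →
      P {x | (⨆ Q ∈ C, Q {x' | h x' ≤ h x}) ≤ α} ≤ α :=
  stmt2_general C h P hP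
end

section
/- Credal set characterization of a possibility measure: a probability measure P on a finite set X belongs to the credal set of the possibility measure with contour pi (i.e., P(E) <= sup_{x in E} pi(x) for all E) if and only if P({x : pi(x) <= alpha}) <= alpha for all alpha in [0,1]. -/
open MeasureTheory
open scoped ENNReal

theorem stmt4_general {X : Type*} [MeasurableSpace X]
    (P : Measure X)
    (pi : X → ℝ≥0∞) (hpi : (⨆ x, pi x) = 1) :
    (∀ E : Set X, P E ≤ ⨆ x ∈ E, pi x) ↔
      (∀ α : ℝ≥0∞, α ≤ 1 → P {x | pi x ≤ α} ≤ α) := by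
  constructor
  · intro h α _
    exact (h _).trans (iSup₂_le fun _ hx => hx)
  · intro h E
    have hsup_le_one : (⨆ x ∈ E, pi x) ≤ 1 := hpi ▸ iSup₂_le fun x _ => le_iSup pi x
    calc P E ≤ P {x | pi x ≤ ⨆ x ∈ E, pi x} :=
          measure_mono fun x hx => le_iSup₂ (f := fun x _ => pi x) x hx
      _ ≤ ⨆ x ∈ E, pi x := h _ hsup_le_one

/-- Credal-set characterization of a possibility measure: a probability measure `P` on a finite
set `X` satisfies `P E ≤ ⨆ x ∈ E, π x` for all `E` iff `P {x | π x ≤ α} ≤ α` for all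
`α ∈ [0,1]`, where `π` is a possibility contour with `⨆ x, π x = 1`. -/
theorem stmt4 {X : Type*} [Fintype X] [Nonempty X] [MeasurableSpace X]
    [MeasurableSingletonClass X]
    (P : Measure X) [IsProbabilityMeasure P]
    (pi : X → ℝ≥0∞) (hpi : (⨆ x, pi x) = 1) :
    (∀ E : Set X, P E ≤ ⨆ x ∈ E, pi x) ↔
      (∀ α : ℝ≥0∞, α ≤ 1 → P {x | pi x ≤ α} ≤ α) :=
  stmt4_general P pi hpi
end

section
/- Minimality among order-compatible consonant outer approximations: fix h : X -> R and a coherent upper probability P-bar on finite X. If omega : X -> [0,1] is any possibility contour (max = 1) whose induced possibility measure outer-approximates P-bar and which has the same plausibility order as h (h(x) > h(x') implies omega(x) > omega(x')), then omega_h(x) = P-bar({x' : h(x') <= h(x)}) satisfies omega_h(x) <= omega(x) pointwise. -/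
open MeasureTheory
open scoped ENNReal

theorem stmt6_general {X : Type*} [MeasurableSpace X]
    (C : Set (Measure X))
    (h : X → ℝ) (ω : X → ℝ≥0∞)
    (houter : ∀ E : Set X, (⨆ P ∈ C, P E) ≤ ⨆ x ∈ E, ω x)
    (horder : ∀ x x' : X, h x ≤ h x' → ω x ≤ ω x') :
    ∀ x : X, (⨆ P ∈ C, P {x' | h x' ≤ h x}) ≤ ω x :=
  fun x => (houter _).trans <| iSup₂_le fun x' hx' => horder x' x hx'

/-- Minimality among order-compatible consonant outer approximations: if `ω` is a possibility
contour (max 1) whose induced possibility measure outer-approximates the coherent upper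
probability `P̄ = ⨆ P ∈ C, P ·` and which has the same plausibility order as `h`
(`h x ≤ h x' → ω x ≤ ω x'`), then `ω_h x = P̄ {x' | h x' ≤ h x} ≤ ω x` pointwise. -/
theorem stmt6 {X : Type*} [Fintype X] [MeasurableSpace X] [MeasurableSingletonClass X]
    (C : Set (Measure X)) (hC : C.Nonempty)
    (hprob : ∀ P ∈ C, IsProbabilityMeasure P)
    (h : X → ℝ) (ω : X → ℝ≥0∞) (hmax : (⨆ x, ω x) = 1)
    (houter : ∀ E : Set X, (⨆ P ∈ C, P E) ≤ ⨆ x ∈ E, ω x)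
    (horder : ∀ x x' : X, h x ≤ h x' → ω x ≤ ω x') :
    ∀ x : X, (⨆ P ∈ C, P {x' | h x' ≤ h x}) ≤ ω x :=
  stmt6_general C h ω houter horder
end

section
/- Strong validity of the focused IM: for the contour pi_y(theta) = P-bar_{Y,Theta}({(y',theta') : eta(y',theta') <= eta(y,theta)}), every probability measure P in the credal set of P-bar_{Y,Theta} satisfies P({(y,theta) : pi_y(theta) <= alpha}) <= alpha for all alpha in [0,1]. -/
open MeasureTheory
open scoped ENNReal

/-!
Every `P` in the credal set lies below the upper envelope, so it suffices to show
`P {p | P {η ≤ η p} ≤ α} ≤ α`. On a finite space this set is contained in the sublevel set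
`{η ≤ η a}` of a point `a` maximising `η` on it, and that sublevel set has `P`-mass at most `α`
because `a` belongs to the set.
-/

theorem measure_setOf_measure_sublevel_le_le {X β : Type*} [Finite X] [MeasurableSpace X]
    [LinearOrder β] (μ : Measure X) (f : X → β) (α : ℝ≥0∞) :
    μ {x | μ {y | f y ≤ f x} ≤ α} ≤ α := by
  set S := {x | μ {y | f y ≤ f x} ≤ α}
  rcases S.eq_empty_or_nonempty with hS | hS
  · simp [hS]
  obtain ⟨a, haS, ha_max⟩ := S.exists_max_image f S.toFinite hS
  calc μ S ≤ μ {y | f y ≤ f a} := measure_mono ha_max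
    _ ≤ α := haS

theorem stmt8_general {Y T : Type*} [Fintype Y] [Fintype T]
    [MeasurableSpace Y] [MeasurableSpace T]
    (C : Set (Measure (Y × T)))
    (η : Y × T → ℝ)
    (P : Measure (Y × T)) (hP : P ∈ C) :
    ∀ α : ℝ≥0∞, α ≤ 1 →
      P {p : Y × T | (⨆ Q ∈ C, Q {p' | η p' ≤ η p}) ≤ α} ≤ α := by
  intro α _
  have h_sub : {p : Y × T | (⨆ Q ∈ C, Q {p' | η p' ≤ η p}) ≤ α} ⊆
      {p | P {p' | η p' ≤ η p} ≤ α} :=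
    fun _ hp => (le_biSup (fun Q : Measure (Y × T) => Q _) hP).trans hp
  exact (measure_mono h_sub).trans (measure_setOf_measure_sublevel_le_le P η α)

/-- Strong validity of the focused IM: with contour
`π_y(θ) = P̄_{Y,Θ} {(y',θ') | η (y',θ') ≤ η (y,θ)}`, every probability measure `P` in the
credal set of `P̄_{Y,Θ}` satisfies `P {(y,θ) | π_y(θ) ≤ α} ≤ α` for all `α ∈ [0,1]`. -/
theorem stmt8 {Y T : Type*} [Fintype Y] [Fintype T]
    [MeasurableSpace Y] [MeasurableSpace T]
    [MeasurableSingletonClass Y] [MeasurableSingletonClass T]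
    (C : Set (Measure (Y × T))) (hC : C.Nonempty)
    (hprob : ∀ P ∈ C, IsProbabilityMeasure P)
    (η : Y × T → ℝ)
    (P : Measure (Y × T)) (hP : P ∈ C) :
    ∀ α : ℝ≥0∞, α ≤ 1 →
      P {p : Y × T | (⨆ Q ∈ C, Q {p' | η p' ≤ η p}) ≤ α} ≤ α :=
  stmt8_general C η P hP
end

section
/- Half-coherence of the IM updating rule: with pi_y(theta) defined as the outer consonant approximation contour of the joint upper probability P-bar_{Y,Theta}, the induced possibility measures Pi-bar_y(A) = sup_{theta in A} pi_y(theta) satisfy sup_{y in Y} Pi-bar_y(A) >= P-bar_Theta(A) for every subset A of T, where P-bar_Theta(A) = P-bar_{Y,Theta}(Y x A) is the marginal prior upper probability. -/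
open MeasureTheory
open scoped ENNReal

/- The possibility measure with contour `p ↦ P̄ {q | η q ≤ η p}` dominates the upper probability
`P̄` on finite sets `S`: `η` attains its maximum over `S` at some `p`, so `S ⊆ {q | η q ≤ η p}`,
and `P̄` is monotone. -/

theorem le_iSup_apply_sublevel_of_finite {α : Type*} {m : Set α → ℝ≥0∞} (hm : Monotone m)
    (hm_empty : m ∅ = 0) (η : α → ℝ) {S : Set α} (hS : S.Finite) :
    m S ≤ ⨆ p ∈ S, m {q | η q ≤ η p} := by
  rcases S.eq_empty_or_nonempty with rfl | hne
  · simp [hm_empty]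
  · obtain ⟨p, hp, hmax⟩ := Set.exists_max_image S η hS hne
    exact (hm fun q hq => hmax q hq).trans (le_iSup₂ (f := fun p _ => m {q | η q ≤ η p}) p hp)

theorem stmt9_general {Y T : Type*} [Fintype Y] [Fintype T]
    [MeasurableSpace Y] [MeasurableSpace T]
    (C : Set (Measure (Y × T)))
    (η : Y × T → ℝ) :
    ∀ A : Set T,
      (⨆ P ∈ C, P (Set.univ ×ˢ A)) ≤
        ⨆ y : Y, ⨆ θ ∈ A, (⨆ P ∈ C, P {p : Y × T | η p ≤ η (y, θ)}) := by
  intro A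
  have hmono : Monotone fun s : Set (Y × T) => ⨆ P ∈ C, P s :=
    fun _ _ hst => iSup₂_mono fun P _ => measure_mono hst
  calc (⨆ P ∈ C, P (Set.univ ×ˢ A))
      ≤ ⨆ p ∈ Set.univ ×ˢ A, ⨆ P ∈ C, P {q : Y × T | η q ≤ η p} :=
        le_iSup_apply_sublevel_of_finite hmono (by simp) η (Set.toFinite _)
    _ ≤ ⨆ y : Y, ⨆ θ ∈ A, (⨆ P ∈ C, P {p : Y × T | η p ≤ η (y, θ)}) :=
        iSup₂_le fun p hp => le_iSup_of_le p.1 <|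
          le_iSup₂_of_le (f := fun θ _ => ⨆ P ∈ C, P {q : Y × T | η q ≤ η (p.1, θ)})
            p.2 hp.2 le_rfl

/-- Half-coherence of the IM updating rule: with
`π_y(θ) = P̄_{Y,Θ} {(y',θ') | η(y',θ') ≤ η(y,θ)}` and `Π̄_y(A) = ⨆ θ ∈ A, π_y(θ)`, one has
`⨆ y, Π̄_y(A) ≥ P̄_Θ(A) = P̄_{Y,Θ}(Y × A)` for every `A ⊆ T`. -/
theorem stmt9 {Y T : Type*} [Fintype Y] [Fintype T]
    [MeasurableSpace Y] [MeasurableSpace T]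
    [MeasurableSingletonClass Y] [MeasurableSingletonClass T]
    (C : Set (Measure (Y × T))) (hC : C.Nonempty)
    (hprob : ∀ P ∈ C, IsProbabilityMeasure P)
    (η : Y × T → ℝ) :
    ∀ A : Set T,
      (⨆ P ∈ C, P (Set.univ ×ˢ A)) ≤
        ⨆ y : Y, ⨆ θ ∈ A, (⨆ P ∈ C, P {p : Y × T | η p ≤ η (y, θ)}) :=
  stmt9_general C η
end

section
/- Testing error-rate control from strong validity: under strong validity of the contour pi, for any fixed hypothesis A subset of T and alpha in [0,1], the joint upper probability of the event {(y,theta) : sup_{t in A} pi_y(t) <= alpha and theta in A} is at most alpha. -/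
open MeasureTheory
open scoped ENNReal

lemma setOf_iSup_le_and_mem_subset_setOf_le {Y T L : Type*} [CompleteLattice L]
    (pi : Y × T → L) (A : Set T) (α : L) :
    {p : Y × T | (⨆ t ∈ A, pi (p.1, t)) ≤ α ∧ p.2 ∈ A} ⊆ {p | pi p ≤ α} :=
  fun p ⟨hsup, hmem⟩ => le_trans (le_iSup₂ (f := fun t _ => pi (p.1, t)) p.2 hmem) hsup

lemma iSup_measure_mono {Ω : Type*} [MeasurableSpace Ω] (C : Set (Measure Ω))
    {s t : Set Ω} (hst : s ⊆ t) : (⨆ P ∈ C, P s) ≤ ⨆ P ∈ C, P t :=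
  iSup₂_mono fun _ _ => measure_mono hst

theorem stmt11_general {Y T : Type*}
    [MeasurableSpace Y] [MeasurableSpace T]
    (C : Set (Measure (Y × T)))
    (pi : Y × T → ℝ≥0∞)
    (hvalid : ∀ α : ℝ≥0∞, α ≤ 1 → (⨆ P ∈ C, P {p : Y × T | pi p ≤ α}) ≤ α) :
    ∀ (A : Set T) (α : ℝ≥0∞), α ≤ 1 →
      (⨆ P ∈ C, P {p : Y × T | (⨆ t ∈ A, pi (p.1, t)) ≤ α ∧ p.2 ∈ A}) ≤ α :=
  fun A α hα =>
    (iSup_measure_mono C (setOf_iSup_le_and_mem_subset_setOf_le pi A α)).trans (hvalid α hα)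

/-- Testing error-rate control from strong validity: for any fixed hypothesis `A ⊆ T` and
`α ∈ [0,1]`, the joint upper probability of the event
`{(y,θ) | ⨆ t ∈ A, π(y,t) ≤ α and θ ∈ A}` is at most `α`. -/
theorem stmt11 {Y T : Type*} [Fintype Y] [Fintype T]
    [MeasurableSpace Y] [MeasurableSpace T]
    (C : Set (Measure (Y × T))) (hC : C.Nonempty)
    (hprob : ∀ P ∈ C, IsProbabilityMeasure P)
    (pi : Y × T → ℝ≥0∞) (hpi1 : ∀ p, pi p ≤ 1)
    (hvalid : ∀ α : ℝ≥0∞, α ≤ 1 → (⨆ P ∈ C, P {p : Y × T | pi p ≤ α}) ≤ α) :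
    ∀ (A : Set T) (α : ℝ≥0∞), α ≤ 1 →
      (⨆ P ∈ C, P {p : Y × T | (⨆ t ∈ A, pi (p.1, t)) ≤ α ∧ p.2 ∈ A}) ≤ α :=
  stmt11_general C pi hvalid
end

section
/- Validity is preserved under the extension principle: if pi_y is a strongly valid contour for Theta, and phi : T -> S is any function, then the marginal contour pi_y^phi(s) = sup_{theta : phi(theta) = s} pi_y(theta) is strongly valid for phi(Theta), i.e., P-bar_{Y,Theta}{(y,theta) : pi_y^phi(phi(theta)) <= alpha} <= alpha for all alpha. -/
open MeasureTheory
open scoped ENNReal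

theorem iSup_measure_setOf_le_antitone {Ω : Type*} [MeasurableSpace Ω] (C : Set (Measure Ω))
    {f g : Ω → ℝ≥0∞} (hfg : f ≤ g) (α : ℝ≥0∞) :
    (⨆ P ∈ C, P {ω | g ω ≤ α}) ≤ ⨆ P ∈ C, P {ω | f ω ≤ α} :=
  iSup₂_mono fun _ _ => measure_mono fun _ hω => (hfg _).trans hω

theorem le_iSup_fiber {Y T S : Type*} (pi : Y × T → ℝ≥0∞) (phi : T → S) (p : Y × T) :
    pi p ≤ ⨆ θ' ∈ {t : T | phi t = phi p.2}, pi (p.1, θ') :=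
  le_iSup₂ (f := fun θ' (_ : θ' ∈ {t : T | phi t = phi p.2}) => pi (p.1, θ')) p.2 rfl

theorem stmt12_general {Y T S : Type*}
    [MeasurableSpace Y] [MeasurableSpace T]
    (C : Set (Measure (Y × T)))
    (pi : Y × T → ℝ≥0∞) (phi : T → S)
    (hvalid : ∀ α : ℝ≥0∞, α ≤ 1 → (⨆ P ∈ C, P {p : Y × T | pi p ≤ α}) ≤ α) :
    ∀ α : ℝ≥0∞, α ≤ 1 →
      (⨆ P ∈ C,
        P {p : Y × T | (⨆ θ' ∈ {t : T | phi t = phi p.2}, pi (p.1, θ')) ≤ α}) ≤ α :=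
  fun α hα =>
    (iSup_measure_setOf_le_antitone C (le_iSup_fiber pi phi) α).trans (hvalid α hα)

/-- Validity is preserved under the extension principle: if `π` is a strongly valid contour for
`Θ` and `φ : T → S`, then the marginal contour `π^φ_y(s) = ⨆ θ ∈ {t | φ t = s}, π(y,θ)` is
strongly valid for `φ(Θ)`. -/
theorem stmt12 {Y T S : Type*} [Fintype Y] [Fintype T] [Fintype S]
    [MeasurableSpace Y] [MeasurableSpace T]
    (C : Set (Measure (Y × T))) (hC : C.Nonempty)
    (hprob : ∀ P ∈ C, IsProbabilityMeasure P)
    (pi : Y × T → ℝ≥0∞) (phi : T → S)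
    (hvalid : ∀ α : ℝ≥0∞, α ≤ 1 → (⨆ P ∈ C, P {p : Y × T | pi p ≤ α}) ≤ α) :
    ∀ α : ℝ≥0∞, α ≤ 1 →
      (⨆ P ∈ C,
        P {p : Y × T | (⨆ θ' ∈ {t : T | phi t = phi p.2}, pi (p.1, θ')) ≤ α}) ≤ α :=
  stmt12_general C pi phi hvalid
end

section
/- Combination validity via Fisher's rule: if U and V are independent random variables each stochastically no smaller than Uniform(0,1) (P(U <= u) <= u and P(V <= v) <= v for all u,v in [0,1]), then K(U,V) = UV(1 - log(UV)) is also stochastically no smaller than Uniform(0,1): P(K(U,V) <= alpha) <= alpha for all alpha in [0,1]. -/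
open MeasureTheory
open scoped ENNReal

/-!
Conditioning on `U`, `P(UV ≤ t) ≤ E min(1, t/U)`. By the layer-cake formula
`E min(1, t/U) = ∫₀¹ P(min(1, t/U) > s) ds`, and `min(1, t/U) > s` forces `U ≤ t/s`, so super-uniformity
of `U` bounds this by `∫₀¹ min(1, t/s) ds = t (1 - log t)`. Finally `x ↦ x (1 - log x)` is strictly
increasing on `[0, 1]`, so `K(U,V) ≤ t (1 - log t)` implies `UV ≤ t`.
-/

open ProbabilityTheory Set Real
open scoped Interval

lemma integral_min_one_div {t : ℝ} (ht0 : 0 ≤ t) (ht1 : t ≤ 1) :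
    ∫ s in (0 : ℝ)..1, min 1 (t / s) = t * (1 - log t) := by
  rcases ht0.eq_or_lt with rfl | ht0
  · simp
  have hleft : EqOn (fun s => min 1 (t / s)) 1 (Ι 0 t) := fun s hs => by
    rw [uIoc_of_le ht0.le] at hs
    exact min_eq_left ((one_le_div hs.1).2 hs.2)
  have hright : EqOn (fun s => min 1 (t / s)) (fun s => t * s⁻¹) [[t, 1]] := fun s hs => by
    rw [uIcc_of_le ht1] at hs
    exact (min_eq_right ((div_le_one (ht0.trans_le hs.1)).2 hs.1)).trans (div_eq_mul_inv t s)
  have h0 : (0 : ℝ) ∉ [[t, 1]] := by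
    rw [uIcc_of_le ht1]
    exact fun h => h.1.not_gt ht0
  have hint_right : IntervalIntegrable (fun s => t * s⁻¹) volume t 1 :=
    (intervalIntegral.intervalIntegrable_inv (fun s hs => ne_of_mem_of_not_mem hs h0)
      continuousOn_id).const_mul t
  rw [← intervalIntegral.integral_add_adjacent_intervals
      ((intervalIntegrable_congr hleft).2 intervalIntegrable_const)
      ((intervalIntegrable_congr (hright.mono uIoc_subset_uIcc)).2 hint_right),
    intervalIntegral.integral_congr_ae (ae_of_all _ fun s hs => hleft hs),
    intervalIntegral.integral_congr hright, intervalIntegral.integral_const_mul, integral_inv h0,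
    log_div one_ne_zero ht0.ne', log_one]
  simp only [Pi.one_apply, intervalIntegral.integral_const, sub_zero, smul_eq_mul, mul_one]
  ring

lemma continuous_mul_one_sub_log : Continuous fun x => x * (1 - log x) :=
  (continuous_id.sub continuous_mul_log).congr fun x => by simp only [Pi.sub_apply, id]; ring

lemma strictMonoOn_mul_one_sub_log : StrictMonoOn (fun x => x * (1 - log x)) (Icc 0 1) := by
  refine strictMonoOn_of_deriv_pos (convex_Icc 0 1) continuous_mul_one_sub_log.continuousOn
    fun x hx => ?_
  rw [interior_Icc] at hx
  have hd : HasDerivAt (fun x => x * (1 - log x)) (-log x) x := by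
    refine ((hasDerivAt_id' x).mul ((hasDerivAt_log hx.1.ne').const_sub 1)).congr_deriv ?_
    rw [mul_neg, mul_inv_cancel₀ hx.1.ne']
    ring
  rw [hd.deriv]
  exact neg_pos.mpr (log_neg hx.1 hx.2)

/-- Stochastically no smaller than `Uniform(0,1)`. Since `ENNReal.ofReal x = 0` for `x ≤ 0`, such a
measure is carried by `(0, ∞)`. -/
def IsSuperUniform (ν : Measure ℝ) : Prop := ∀ x, ν (Iic x) ≤ ENNReal.ofReal x

namespace IsSuperUniform

variable {ν ρ : Measure ℝ} {t : ℝ}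

lemma ae_pos (hν : IsSuperUniform ν) : ∀ᵐ x ∂ν, 0 < x := by
  refine measure_mono_null (fun x (hx : ¬0 < x) => (not_lt.1 hx : x ∈ Iic 0)) ?_
  exact nonpos_iff_eq_zero.1 ((hν 0).trans_eq ENNReal.ofReal_zero)

lemma measure_Iic_le_min [IsProbabilityMeasure ν] (hν : IsSuperUniform ν) (x : ℝ) :
    ν (Iic x) ≤ ENNReal.ofReal (min 1 x) := by
  rw [ENNReal.ofReal_min, ENNReal.ofReal_one]
  exact le_min prob_le_one (hν x)

lemma measure_lt_min_one_div_le [IsProbabilityMeasure ν] (hν : IsSuperUniform ν) (ht : 0 ≤ t)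
    {s : ℝ} (hs : 0 < s) :
    ν {x | s < min 1 (t / x)} ≤ (Iio 1).indicator (fun s => ENNReal.ofReal (min 1 (t / s))) s := by
  rcases lt_or_ge s 1 with hs1 | hs1
  · rw [indicator_of_mem (mem_Iio.2 hs1)]
    refine (measure_mono fun x (hx : s < min 1 (t / x)) => ?_).trans (hν.measure_Iic_le_min _)
    have hsx : s < t / x := hx.trans_le (min_le_right _ _)
    have hx0 : 0 < x := by
      by_contra! h
      exact (hs.trans hsx).not_ge (div_nonpos_of_nonneg_of_nonpos ht h)
    rw [mem_Iic, le_div_iff₀ hs, mul_comm]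
    exact ((lt_div_iff₀ hx0).1 hsx).le
  · rw [indicator_of_notMem (notMem_Iio.2 hs1), nonpos_iff_eq_zero,
      measure_eq_zero_iff_ae_notMem]
    exact ae_of_all _ fun x hx => (hx.trans_le (min_le_left _ _)).not_ge hs1

lemma lintegral_min_one_div_le [IsProbabilityMeasure ν] (hν : IsSuperUniform ν) (ht0 : 0 ≤ t)
    (ht1 : t ≤ 1) :
    ∫⁻ x, ENNReal.ofReal (min 1 (t / x)) ∂ν ≤ ENNReal.ofReal (t * (1 - log t)) := by
  have hnonneg : 0 ≤ᵐ[ν] fun x => min 1 (t / x) := by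
    filter_upwards [hν.ae_pos] with x hx
    exact le_min zero_le_one (div_nonneg ht0 hx.le)
  have hnonneg_Ioo : ∀ s ∈ Ioo (0 : ℝ) 1, 0 ≤ min 1 (t / s) := fun s hs =>
    le_min zero_le_one (div_nonneg ht0 hs.1.le)
  have hint : IntegrableOn (fun s => min 1 (t / s)) (Ioo 0 1) :=
    IntegrableOn.of_bound measure_Ioo_lt_top (by fun_prop) 1
      (ae_restrict_of_forall_mem measurableSet_Ioo fun s hs => by
        rw [Real.norm_of_nonneg (hnonneg_Ioo s hs)]
        exact min_le_left _ _)
  rw [lintegral_eq_lintegral_meas_lt ν hnonneg (by fun_prop)]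
  calc ∫⁻ s in Ioi 0, ν {x | s < min 1 (t / x)}
      ≤ ∫⁻ s in Ioi 0, (Iio 1).indicator (fun s => ENNReal.ofReal (min 1 (t / s))) s :=
        setLIntegral_mono' measurableSet_Ioi fun s hs => hν.measure_lt_min_one_div_le ht0 hs
    _ = ∫⁻ s in Ioo 0 1, ENNReal.ofReal (min 1 (t / s)) := by
        rw [lintegral_indicator measurableSet_Iio, Measure.restrict_restrict measurableSet_Iio,
          Iio_inter_Ioi]
    _ = ENNReal.ofReal (t * (1 - log t)) := by
        rw [← integral_min_one_div ht0 ht1, intervalIntegral.integral_of_le zero_le_one,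
          integral_Ioc_eq_integral_Ioo, ofReal_integral_eq_lintegral_ofReal hint
            (ae_restrict_of_forall_mem measurableSet_Ioo hnonneg_Ioo)]

lemma prod_mul_le_lintegral [SFinite ν] [IsProbabilityMeasure ρ] (hν : IsSuperUniform ν)
    (hρ : IsSuperUniform ρ) :
    (ν.prod ρ) {p | p.1 * p.2 ≤ t} ≤ ∫⁻ x, ENNReal.ofReal (min 1 (t / x)) ∂ν := by
  rw [Measure.prod_apply (measurableSet_le (by fun_prop) (by fun_prop))]
  refine lintegral_mono_ae ?_
  filter_upwards [hν.ae_pos] with x hx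
  have hslice : Prod.mk x ⁻¹' {p : ℝ × ℝ | p.1 * p.2 ≤ t} = Iic (t / x) := by
    ext y
    simp [le_div_iff₀ hx, mul_comm]
  rw [hslice]
  exact hρ.measure_Iic_le_min _

end IsSuperUniform

section RandomVariables

variable {Ω : Type*} [MeasurableSpace Ω] {μ : Measure Ω} [IsProbabilityMeasure μ] {X Y : Ω → ℝ}

lemma isSuperUniform_map (hX : Measurable X)
    (h : ∀ x ∈ Icc (0 : ℝ) 1, μ {ω | X ω ≤ x} ≤ ENNReal.ofReal x) :
    IsSuperUniform (μ.map X) := by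
  intro x
  rw [Measure.map_apply hX measurableSet_Iic]
  rcases lt_or_ge x 0 with hx0 | hx0
  · calc μ (X ⁻¹' Iic x) ≤ μ {ω | X ω ≤ 0} :=
          measure_mono fun ω (hω : X ω ≤ x) => hω.trans hx0.le
      _ ≤ ENNReal.ofReal x := by
          simpa [ENNReal.ofReal_of_nonpos hx0.le] using h 0 (left_mem_Icc.2 zero_le_one)
  rcases le_or_gt x 1 with hx1 | hx1
  · exact h x ⟨hx0, hx1⟩
  · exact prob_le_one.trans (ENNReal.one_le_ofReal.2 hx1.le)

lemma measure_mul_le_of_indepFun (hX : Measurable X) (hY : Measurable Y) (hXY : IndepFun X Y μ)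
    (hXs : IsSuperUniform (μ.map X)) (hYs : IsSuperUniform (μ.map Y)) {t : ℝ} (ht0 : 0 ≤ t)
    (ht1 : t ≤ 1) :
    μ {ω | X ω * Y ω ≤ t} ≤ ENNReal.ofReal (t * (1 - log t)) := by
  have := Measure.isProbabilityMeasure_map (μ := μ) hX.aemeasurable
  have := Measure.isProbabilityMeasure_map (μ := μ) hY.aemeasurable
  rw [indepFun_iff_map_prod_eq_prod_map_map hX.aemeasurable hY.aemeasurable] at hXY
  calc μ {ω | X ω * Y ω ≤ t} = (μ.map fun ω => (X ω, Y ω)) {p | p.1 * p.2 ≤ t} :=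
        (Measure.map_apply (hX.prodMk hY)
          (measurableSet_le (measurable_fst.mul measurable_snd) measurable_const)).symm
    _ ≤ ∫⁻ x, ENNReal.ofReal (min 1 (t / x)) ∂(μ.map X) := by
        rw [hXY]
        exact hXs.prod_mul_le_lintegral hYs
    _ ≤ ENNReal.ofReal (t * (1 - log t)) := hXs.lintegral_min_one_div_le ht0 ht1

end RandomVariables

/-- Combination validity via Fisher's rule: if `U` and `V` are independent `[0,1]`-valued random
variables, each stochastically no smaller than `Uniform(0,1)`, then
`K(U,V) = U V (1 - log (U V))` is also stochastically no smaller than `Uniform(0,1)`. -/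
theorem stmt19 {Ω : Type*} [MeasurableSpace Ω] (μ : Measure Ω) [IsProbabilityMeasure μ]
    (U V : Ω → ℝ) (hU : Measurable U) (hV : Measurable V)
    (hUrange : ∀ ω, U ω ∈ Set.Icc (0:ℝ) 1) (hVrange : ∀ ω, V ω ∈ Set.Icc (0:ℝ) 1)
    (hindep : ProbabilityTheory.IndepFun U V μ)
    (hUdom : ∀ u ∈ Set.Icc (0:ℝ) 1, μ {ω | U ω ≤ u} ≤ ENNReal.ofReal u)
    (hVdom : ∀ v ∈ Set.Icc (0:ℝ) 1, μ {ω | V ω ≤ v} ≤ ENNReal.ofReal v) :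
    ∀ α ∈ Set.Icc (0:ℝ) 1,
      μ {ω | U ω * V ω * (1 - Real.log (U ω * V ω)) ≤ α} ≤ ENNReal.ofReal α := by
  intro α hα
  obtain ⟨t, ht, rfl⟩ : ∃ t ∈ Icc (0 : ℝ) 1, t * (1 - log t) = α :=
    intermediate_value_Icc zero_le_one continuous_mul_one_sub_log.continuousOn (by simpa using hα)
  have hUV : ∀ ω, U ω * V ω ∈ Icc (0 : ℝ) 1 := fun ω =>
    ⟨mul_nonneg (hUrange ω).1 (hVrange ω).1,
      mul_le_one₀ (hUrange ω).2 (hVrange ω).1 (hVrange ω).2⟩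
  have hsub : {ω | U ω * V ω * (1 - log (U ω * V ω)) ≤ t * (1 - log t)} ⊆ {ω | U ω * V ω ≤ t} :=
    fun ω hω => not_lt.1 fun h => (strictMonoOn_mul_one_sub_log ht (hUV ω) h).not_ge hω
  exact (measure_mono hsub).trans (measure_mul_le_of_indepFun hU hV hindep
    (isSuperUniform_map hU hUdom) (isSuperUniform_map hV hVdom) ht.1 ht.2)
end
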